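/- Let L ≥ 2 be an integer, N = 2^L, ℓ ∈ {1,…,L−1}, and let X_{ℓ+1}, …, X_L ∈ ℂ^{N×N} satisfy supp(X_p) ⊆ supp(S_p) for every p ∈ {ℓ+1,…,L}, where S_p := I_{2^{p−1}} ⊗ J_2 ⊗ I_{N/2^p}. Then supp(X_{ℓ+1} X_{ℓ+2} ⋯ X_L) ⊆ supp(I_{2^ℓ} ⊗ J_{N/2^ℓ}). -/

import Mathlib

open Matrix Kronecker

/-- The `n × n` all-ones matrix `J_n`. -/
def Jmat (n : ℕ) : Matrix (Fin n) (Fin n) ℂ := Matrix.of fun _ _ => 1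

lemma two_pow_div (L ℓ : ℕ) (h : ℓ ≤ L) : 2 ^ L / 2 ^ ℓ = 2 ^ (L - ℓ) :=
  Nat.pow_div h (by norm_num)

lemma two_pow_mul_div (L ℓ : ℕ) (h : ℓ ≤ L) : 2 ^ ℓ * (2 ^ L / 2 ^ ℓ) = 2 ^ L :=
  Nat.mul_div_cancel' (pow_dvd_pow 2 h)

lemma bfly_dim (L ℓ : ℕ) (h1 : 1 ≤ ℓ) (h2 : ℓ ≤ L) :
    2 ^ (ℓ - 1) * (2 * (2 ^ L / 2 ^ ℓ)) = 2 ^ L := by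
  rw [two_pow_div L ℓ h2, show (2 : ℕ) * 2 ^ (L - ℓ) = 2 ^ (L - ℓ + 1) by rw [pow_succ]; ring,
    ← pow_add]
  congr 1
  omega

/-- Reindexing equivalence `Fin 2^(ℓ-1) × (Fin 2 × Fin (2^L/2^ℓ)) ≃ Fin 2^L`,
sending `(a, (b, c))` to the lexicographic index `a·(2·2^L/2^ℓ) + b·(2^L/2^ℓ) + c`. -/
def bflyEquiv (L ℓ : ℕ) (h1 : 1 ≤ ℓ) (h2 : ℓ ≤ L) :
    Fin (2 ^ (ℓ - 1)) × (Fin 2 × Fin (2 ^ L / 2 ^ ℓ)) ≃ Fin (2 ^ L) :=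
  ((Equiv.refl _).prodCongr finProdFinEquiv).trans
    (finProdFinEquiv.trans (finCongr (bfly_dim L ℓ h1 h2)))

/-- The butterfly support `S_ℓ = I_{2^{ℓ-1}} ⊗ J_2 ⊗ I_{N/2^ℓ}`, as an `N × N` matrix,
`N = 2^L`. -/
def bflySupp (L ℓ : ℕ) (h1 : 1 ≤ ℓ) (h2 : ℓ ≤ L) : Matrix (Fin (2 ^ L)) (Fin (2 ^ L)) ℂ :=
  Matrix.reindex (bflyEquiv L ℓ h1 h2) (bflyEquiv L ℓ h1 h2)
    ((1 : Matrix (Fin (2 ^ (ℓ - 1))) (Fin (2 ^ (ℓ - 1))) ℂ) ⊗ₖ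
      (Jmat 2 ⊗ₖ (1 : Matrix (Fin (2 ^ L / 2 ^ ℓ)) (Fin (2 ^ L / 2 ^ ℓ)) ℂ)))

/-- Reindexing equivalence `Fin 2^ℓ × Fin (2^L/2^ℓ) ≃ Fin 2^L` (lexicographic). -/
def blockEquiv (L ℓ : ℕ) (h : ℓ ≤ L) : Fin (2 ^ ℓ) × Fin (2 ^ L / 2 ^ ℓ) ≃ Fin (2 ^ L) :=
  finProdFinEquiv.trans (finCongr (two_pow_mul_div L ℓ h))

/-- The matrix `J_{2^ℓ} ⊗ I_{N/2^ℓ}`, as an `N × N` matrix, `N = 2^L`. -/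
def JkronI (L ℓ : ℕ) (h : ℓ ≤ L) : Matrix (Fin (2 ^ L)) (Fin (2 ^ L)) ℂ :=
  Matrix.reindex (blockEquiv L ℓ h) (blockEquiv L ℓ h)
    (Jmat (2 ^ ℓ) ⊗ₖ (1 : Matrix (Fin (2 ^ L / 2 ^ ℓ)) (Fin (2 ^ L / 2 ^ ℓ)) ℂ))

/-- The matrix `I_{2^ℓ} ⊗ J_{N/2^ℓ}`, as an `N × N` matrix, `N = 2^L`. -/
def IkronJ (L ℓ : ℕ) (h : ℓ ≤ L) : Matrix (Fin (2 ^ L)) (Fin (2 ^ L)) ℂ :=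
  Matrix.reindex (blockEquiv L ℓ h) (blockEquiv L ℓ h)
    ((1 : Matrix (Fin (2 ^ ℓ)) (Fin (2 ^ ℓ)) ℂ) ⊗ₖ Jmat (2 ^ L / 2 ^ ℓ))

/-- The `k`-th element of the canonical row index set `R^(ℓ)_i` (0-based):
`i + k·(N/2^ℓ)`, for `i ∈ Fin (N/2^ℓ)`, `k ∈ Fin 2^ℓ`, `N = 2^L`. -/
def rowIdx (L ℓ : ℕ) (h : ℓ ≤ L) (i : Fin (2 ^ L / 2 ^ ℓ)) (k : Fin (2 ^ ℓ)) : Fin (2 ^ L) :=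
  ⟨(i : ℕ) + (k : ℕ) * (2 ^ L / 2 ^ ℓ), by
    have hi := i.isLt
    have hk := k.isLt
    calc (i : ℕ) + (k : ℕ) * (2 ^ L / 2 ^ ℓ)
        < 2 ^ L / 2 ^ ℓ + (k : ℕ) * (2 ^ L / 2 ^ ℓ) := by omega
      _ = ((k : ℕ) + 1) * (2 ^ L / 2 ^ ℓ) := by ring
      _ ≤ 2 ^ ℓ * (2 ^ L / 2 ^ ℓ) := Nat.mul_le_mul_right _ (by omega)
      _ = 2 ^ L := two_pow_mul_div L ℓ h⟩

/-- The `k`-th element of the canonical column index set `C^(ℓ)_j` (0-based):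
`j·(N/2^ℓ) + k`, for `j ∈ Fin 2^ℓ`, `k ∈ Fin (N/2^ℓ)`, `N = 2^L`. -/
def colIdx (L ℓ : ℕ) (h : ℓ ≤ L) (j : Fin (2 ^ ℓ)) (k : Fin (2 ^ L / 2 ^ ℓ)) : Fin (2 ^ L) :=
  ⟨(j : ℕ) * (2 ^ L / 2 ^ ℓ) + (k : ℕ), by
    have hj := j.isLt
    have hk := k.isLt
    calc (j : ℕ) * (2 ^ L / 2 ^ ℓ) + (k : ℕ)
        < (j : ℕ) * (2 ^ L / 2 ^ ℓ) + (2 ^ L / 2 ^ ℓ) := by omega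
      _ = ((j : ℕ) + 1) * (2 ^ L / 2 ^ ℓ) := by ring
      _ ≤ 2 ^ ℓ * (2 ^ L / 2 ^ ℓ) := Nat.mul_le_mul_right _ (by omega)
      _ = 2 ^ L := two_pow_mul_div L ℓ h⟩

/-- The squared Frobenius norm `‖A‖_F²` of a complex matrix. -/
noncomputable def frobSq {m n : Type*} [Fintype m] [Fintype n] (A : Matrix m n ℂ) : ℝ :=
  ∑ i, ∑ j, ‖A i j‖ ^ 2

/-!
A factor `X_p` supported in `S_p = I_{2^{p-1}} ⊗ J_2 ⊗ I_{N/2^p}` is block diagonal with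
diagonal blocks of size `N/2^{p-1}`. For `p > ℓ` these blocks refine the blocks of size `N/2^ℓ`
of `I_{2^ℓ} ⊗ J_{N/2^ℓ}`, and the matrices that are block diagonal for a fixed partition of the
indices form a monoid, so the product is block diagonal for that coarser partition as well.
-/

namespace Matrix

variable {n R α : Type*} [Fintype n] [DecidableEq n] [Semiring R]

def blockSupportSubmonoid (f : n → α) : Submonoid (Matrix n n R) where
  carrier := {M | ∀ a b, M a b ≠ 0 → f a = f b}
  one_mem' a b h := by
    by_contra hne
    exact h (one_apply_ne fun hab => hne (congrArg f hab))
  mul_mem' {M N} hM hN a b h := by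
    obtain ⟨c, -, hc⟩ := Finset.exists_ne_zero_of_sum_ne_zero (mul_apply (M := M) ▸ h)
    exact (hM a c (left_ne_zero_of_mul hc)).trans (hN c b (right_ne_zero_of_mul hc))

theorem fst_eq_of_one_kronecker_apply_ne_zero {m p : Type*} [DecidableEq m]
    (B : Matrix p p R) {i j : m × p} (h : ((1 : Matrix m m R) ⊗ₖ B) i j ≠ 0) : i.1 = j.1 := by
  by_contra hne
  exact h (by simp [kroneckerMap_apply, one_apply_ne hne])

end Matrix

theorem Nat.div_eq_div_of_dvd_of_div_eq {a b d d' : ℕ} (hd : d ∣ d') (h : a / d = b / d) :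
    a / d' = b / d' := by
  obtain ⟨k, rfl⟩ := hd
  rw [← Nat.div_div_eq_div_mul, h, Nat.div_div_eq_div_mul]

theorem bflySupp_apply_ne_zero {L p : ℕ} {h1 : 1 ≤ p} {h2 : p ≤ L} {a b : Fin (2 ^ L)}
    (h : bflySupp L p h1 h2 a b ≠ 0) :
    (a : ℕ) / (2 * (2 ^ L / 2 ^ p)) = (b : ℕ) / (2 * (2 ^ L / 2 ^ p)) := by
  have := congrArg Fin.val (Matrix.fst_eq_of_one_kronecker_apply_ne_zero _ h)
  simpa [bflyEquiv, Fin.divNat] using this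

theorem IkronJ_apply_ne_zero {L ℓ : ℕ} {h : ℓ ≤ L} {a b : Fin (2 ^ L)}
    (hab : (a : ℕ) / (2 ^ L / 2 ^ ℓ) = (b : ℕ) / (2 ^ L / 2 ^ ℓ)) : IkronJ L ℓ h a b ≠ 0 := by
  have : ((blockEquiv L ℓ h).symm a).1 = ((blockEquiv L ℓ h).symm b).1 :=
    Fin.ext (by simpa [blockEquiv, Fin.divNat])
  simp only [IkronJ, reindex_apply, submatrix_apply, kroneckerMap_apply, Jmat, of_apply]
  rw [this, one_apply_eq]
  norm_num

theorem two_mul_two_pow_div_dvd {L ℓ q : ℕ} (hℓq : ℓ < q) (hqL : q ≤ L) :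
    2 * (2 ^ L / 2 ^ q) ∣ 2 ^ L / 2 ^ ℓ := by
  rw [two_pow_div L q hqL, two_pow_div L ℓ (by omega), ← pow_succ']
  exact pow_dvd_pow 2 (by omega)

/-- For `L ≥ 2`, `N = 2^L`, `ℓ ∈ {1,…,L-1}`: if `X_{ℓ+1}, …, X_L ∈ ℂ^{N×N}`
satisfy `supp(X_p) ⊆ supp(S_p)` for every `p ∈ {ℓ+1,…,L}`, then
`supp(X_{ℓ+1} X_{ℓ+2} ⋯ X_L) ⊆ supp(I_{2^ℓ} ⊗ J_{N/2^ℓ})`. -/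
theorem supp_prod_right_subset (L : ℕ) (ℓ : ℕ) (hℓ2 : ℓ ≤ L - 1)
    (X : Fin (L - ℓ) → Matrix (Fin (2 ^ L)) (Fin (2 ^ L)) ℂ)
    (hX : ∀ p : Fin (L - ℓ), ∀ a b, X p a b ≠ 0 →
      bflySupp L (ℓ + 1 + (p : ℕ)) (by omega) (by have := p.isLt; omega) a b ≠ 0) :
    ∀ a b, (List.ofFn X).prod a b ≠ 0 → IkronJ L ℓ (by omega) a b ≠ 0 := by
  intro a b hab
  apply IkronJ_apply_ne_zero
  have hfactor : ∀ p, X p ∈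
      Matrix.blockSupportSubmonoid fun c : Fin (2 ^ L) => (c : ℕ) / (2 ^ L / 2 ^ ℓ) :=
    fun p a b hp => Nat.div_eq_div_of_dvd_of_div_eq
      (two_mul_two_pow_div_dvd (by omega) (by omega)) (bflySupp_apply_ne_zero (hX p a b hp))
  exact Submonoid.list_prod_mem _ (List.forall_mem_ofFn_iff.2 hfactor) a b hab
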